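/- For every k ≥ 1 there exists a constant C = C(k) such that for every n ≥ 2, the number of simple graphs on the labeled vertex set {1,…,n} having clique-width at most k is at most 2^{C·n·log₂ n} (equivalently, at most n^{C·n}). -/

import Mathlib

/-- The color-controlled join of two vertex-disjoint colored graphs:
disjoint union plus all edges between a vertex of `G₁` colored `i` and a vertex of
`G₂` colored `j` for `(i,j) ∈ S`. -/
def joinGraph {k : ℕ} {α β : Type*} (G₁ : SimpleGraph α) (G₂ : SimpleGraph β)
    (c₁ : α → Fin k) (c₂ : β → Fin k) (S : Set (Fin k × Fin k)) : SimpleGraph (α ⊕ β) where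
  Adj x y :=
    match x, y with
    | Sum.inl a, Sum.inl b => G₁.Adj a b
    | Sum.inr a, Sum.inr b => G₂.Adj a b
    | Sum.inl a, Sum.inr b => (c₁ a, c₂ b) ∈ S
    | Sum.inr b, Sum.inl a => (c₁ a, c₂ b) ∈ S
  symm := by
    constructor
    rintro (a | a) (b | b) h
    · exact G₁.adj_symm h
    · exact h
    · exact h
    · exact G₂.adj_symm h
  loopless := by
    constructor
    rintro (a | a) h
    · exact h.ne rfl
    · exact h.ne rfl

/-- Add all edges between vertices colored `i` and vertices colored `j`. -/
def addColorEdges {k : ℕ} {α : Type*} (G : SimpleGraph α) (c : α → Fin k)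
    (i j : Fin k) : SimpleGraph α where
  Adj u v := G.Adj u v ∨ (u ≠ v ∧ ((c u = i ∧ c v = j) ∨ (c u = j ∧ c v = i)))
  symm := by
    constructor
    intro u v h
    rcases h with h | ⟨hne, hc⟩
    · exact Or.inl h.symm
    · exact Or.inr ⟨hne.symm, hc.symm.imp And.symm And.symm⟩
  loopless := by
    constructor
    intro v h
    rcases h with h | ⟨hne, _⟩
    · exact h.ne rfl
    · exact hne rfl

/-- Clique-width expressions with colors in `Fin k`. -/
inductive CWExpr (k : ℕ) : Type
  | single (c : Fin k) : CWExpr k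
  | union (t₁ t₂ : CWExpr k) : CWExpr k
  | addEdges (i j : Fin k) (hij : i ≠ j) (t : CWExpr k) : CWExpr k
  | recolor (i j : Fin k) (t : CWExpr k) : CWExpr k

namespace CWExpr

variable {k : ℕ}

/-- The vertex set of the colored graph built by a clique-width expression. -/
def V : CWExpr k → Type
  | single _ => Unit
  | union t₁ t₂ => t₁.V ⊕ t₂.V
  | addEdges _ _ _ t => t.V
  | recolor _ _ t => t.V

/-- The coloring of the colored graph built by a clique-width expression. -/
def coloring : (t : CWExpr k) → t.V → Fin k
  | single c => fun _ => c
  | union t₁ t₂ => Sum.elim t₁.coloring t₂.coloring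
  | addEdges _ _ _ t => t.coloring
  | recolor i j t => fun v => if t.coloring v = i then j else t.coloring v

/-- The graph built by a clique-width expression. -/
def graph : (t : CWExpr k) → SimpleGraph t.V
  | single _ => ⊥
  | union t₁ t₂ => joinGraph t₁.graph t₂.graph t₁.coloring t₂.coloring ∅
  | addEdges i j _ t => addColorEdges t.graph t.coloring i j
  | recolor _ _ t => t.graph

end CWExpr

/-- `G` has clique-width at most `k`: it is the underlying graph of a colored graph
constructible by the clique-width operations with `k` colors. -/
def HasCliqueWidthLE {V : Type*} (G : SimpleGraph V) (k : ℕ) : Prop :=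
  ∃ t : CWExpr k, Nonempty (G ≃g t.graph)

/-- The clique-width of a graph: the least `k` such that `G` is constructible with `k` colors. -/
noncomputable def cliqueWidth {V : Type*} (G : SimpleGraph V) : ℕ :=
  sInf {k | HasCliqueWidthLE G k}

/-!
A clique-width expression can be put into a normal form: a binary tree whose `n` leaves carry
the initial colours and each of whose `n - 1` inner nodes takes a disjoint union, adds all edges
between the pairs of colours in a set `R`, and then recolours by a map `f`. Every operation
following a union is absorbed into its node: a recolouring composes with `f`, and adding the
edges between colours `i` and `j` after `f` adds to `R` the pairs `(a, b)` with `f a = i` and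
`f b = j`. Such a tree is determined by its preorder traversal, a word of length `2n - 1` over an
alphabet whose size `A` depends only on `k`, and a graph on `Fin n` isomorphic to its graph is
determined by the tree and a numbering of its leaves. This gives at most `A ^ (2n - 1) * n ^ n`
graphs.

Since `cliqueWidth` is an `sInf`, which is `0` on the empty set, one also needs that every graph
on `Fin n` has clique-width at most `n`: colour the vertices injectively and add the edges one
at a time.
-/

open SimpleGraph Function

section ColoredGraphs

variable {V W : Type*} {k : ℕ}

lemma joinGraph_empty (G : SimpleGraph V) (H : SimpleGraph W) (c : V → Fin k) (d : W → Fin k) :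
    joinGraph G H c d ∅ = G ⊕g H := by
  ext (u | u) (v | v) <;> simp [joinGraph]

lemma SimpleGraph.bot_sum_bot : (⊥ : SimpleGraph V) ⊕g (⊥ : SimpleGraph W) = ⊥ := by
  ext (u | u) (v | v) <;> simp

lemma addColorEdges_of_subsingleton [Subsingleton V] (G : SimpleGraph V) (c : V → Fin k)
    (i j : Fin k) : addColorEdges G c i j = G := by
  ext u v
  simp [addColorEdges, Subsingleton.elim u v]

lemma addColorEdges_comp_injective {m : ℕ} {φ : Fin k → Fin m} (hφ : Injective φ)
    (G : SimpleGraph V) (c : V → Fin k) (i j : Fin k) :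
    addColorEdges G (φ ∘ c) (φ i) (φ j) = addColorEdges G c i j := by
  ext u v
  simp [addColorEdges, hφ.eq_iff]

lemma addColorEdges_apply_eq_sup_edge {G : SimpleGraph V} {c : V → Fin k} (hc : Injective c)
    (u v : V) : addColorEdges G c (c u) (c v) = G ⊔ edge u v := by
  ext x y
  simp only [addColorEdges, sup_adj, edge_adj, hc.eq_iff]
  tauto

def SimpleGraph.Iso.addColorEdges {G : SimpleGraph V} {H : SimpleGraph W} {c : V → Fin k}
    {d : W → Fin k} (e : G ≃g H) (he : ∀ v, d (e v) = c v) (i j : Fin k) :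
    addColorEdges G c i j ≃g addColorEdges H d i j where
  toEquiv := e.toEquiv
  map_rel_iff' {u v} := by
    simp [_root_.addColorEdges, he, e.map_adj_iff]

end ColoredGraphs

def IsCWRealizable {V : Type*} (k : ℕ) (G : SimpleGraph V) (c : V → Fin k) : Prop :=
  ∃ t : CWExpr k, ∃ e : G ≃g t.graph, ∀ v, t.coloring (e v) = c v

namespace IsCWRealizable

variable {V W : Type*} {k : ℕ} {G : SimpleGraph V} {c : V → Fin k}

lemma of_iso {H : SimpleGraph W} {d : W → Fin k} (h : IsCWRealizable k H d) (e : G ≃g H) :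
    IsCWRealizable k G (d ∘ e) := by
  obtain ⟨t, e', he'⟩ := h
  exact ⟨t, e.trans e', fun v => he' (e v)⟩

lemma sum {H : SimpleGraph W} {d : W → Fin k} (hG : IsCWRealizable k G c)
    (hH : IsCWRealizable k H d) : IsCWRealizable k (G ⊕g H) (Sum.elim c d) := by
  obtain ⟨t₁, e₁, he₁⟩ := hG
  obtain ⟨t₂, e₂, he₂⟩ := hH
  refine ⟨.union t₁ t₂, ?_⟩
  rw [CWExpr.graph, joinGraph_empty]
  exact ⟨e₁.sumCongr e₂, Sum.rec he₁ he₂⟩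

lemma addColorEdges (h : IsCWRealizable k G c) {i j : Fin k} (hij : i ≠ j) :
    IsCWRealizable k (addColorEdges G c i j) c := by
  obtain ⟨t, e, he⟩ := h
  exact ⟨.addEdges i j hij t, e.addColorEdges he i j, he⟩

lemma sup_edge (h : IsCWRealizable k G c) (hc : Injective c) (u v : V) :
    IsCWRealizable k (G ⊔ edge u v) c := by
  obtain rfl | huv := eq_or_ne u v
  · rwa [edge_self_eq_bot, sup_bot_eq]
  · rw [← addColorEdges_apply_eq_sup_edge hc]
    exact h.addColorEdges (hc.ne huv)

end IsCWRealizable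

lemma isCWRealizable_bot {k : ℕ} : ∀ {n : ℕ} (c : Fin (n + 1) → Fin k),
    IsCWRealizable k (⊥ : SimpleGraph (Fin (n + 1))) c
  | 0, c => by
    refine ⟨.single (c 0), ⟨Equiv.ofUnique (Fin 1) Unit, by simp⟩, fun v => ?_⟩
    rw [Subsingleton.elim (α := Fin 1) v 0]
    rfl
  | n + 1, c => by
    have hsum := (isCWRealizable_bot (c ∘ Fin.castAdd 1)).sum
      (isCWRealizable_bot (n := 0) (c ∘ Fin.natAdd (n + 1)))
    rw [bot_sum_bot] at hsum
    convert hsum.of_iso (G := ⊥) ⟨finSumFinEquiv.symm, by simp⟩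
    ext v
    induction v using Fin.addCases <;> simp

lemma isCWRealizable_of_injective {k n : ℕ} (G : SimpleGraph (Fin (n + 1)))
    {c : Fin (n + 1) → Fin k} (hc : Injective c) : IsCWRealizable k G c := by
  rw [← fromEdgeSet_edgeSet G]
  induction G.edgeSet, G.edgeSet.toFinite using Set.Finite.induction_on with
  | empty => simpa using isCWRealizable_bot c
  | @insert a s _ _ ih =>
    induction a using Sym2.ind with
    | _ u v =>
      rw [Set.insert_eq, fromEdgeSet_union, sup_comm]
      exact ih.sup_edge hc u v

lemma hasCliqueWidthLE_fin (n : ℕ) [NeZero n] (G : SimpleGraph (Fin n)) :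
    HasCliqueWidthLE G n := by
  obtain ⟨m, rfl⟩ := Nat.exists_eq_succ_of_ne_zero (NeZero.ne n)
  obtain ⟨t, e, -⟩ := isCWRealizable_of_injective G (c := id) injective_id
  exact ⟨t, ⟨e⟩⟩

lemma HasCliqueWidthLE.cliqueWidth {V : Type*} {G : SimpleGraph V} {k : ℕ}
    (h : HasCliqueWidthLE G k) : HasCliqueWidthLE G (cliqueWidth G) :=
  Nat.sInf_mem (s := {k | HasCliqueWidthLE G k}) ⟨k, h⟩

inductive CWTree (k : ℕ) : Type
  | leaf (c : Fin k) : CWTree k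
  | node (R : Finset (Fin k × Fin k)) (f : Fin k → Fin k) (l r : CWTree k) : CWTree k

namespace CWTree

variable {k : ℕ}

abbrev V : CWTree k → Type
  | leaf _ => Unit
  | node _ _ l r => l.V ⊕ r.V

def coloring : (s : CWTree k) → s.V → Fin k
  | leaf c => fun _ => c
  | node _ f l r => f ∘ Sum.elim l.coloring r.coloring

def graph : (s : CWTree k) → SimpleGraph s.V
  | leaf _ => ⊥
  | node R _ l r => (l.graph ⊕g r.graph) ⊔
      fromRel fun u v => (Sum.elim l.coloring r.coloring u, Sum.elim l.coloring r.coloring v) ∈ R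

lemma graph_node_empty (f : Fin k → Fin k) (l r : CWTree k) :
    (node ∅ f l r).graph = l.graph ⊕g r.graph := by
  ext u v
  simp [graph]

lemma graph_node_union (R : Finset (Fin k × Fin k)) (f : Fin k → Fin k) (l r : CWTree k)
    (i j : Fin k) :
    (node (R ∪ ({p | f p.1 = i ∧ f p.2 = j} : Finset (Fin k × Fin k))) f l r).graph =
      addColorEdges (node R f l r).graph (node R f l r).coloring i j := by
  ext u v
  simp only [graph, coloring, addColorEdges, sup_adj, fromRel_adj, Finset.mem_union,
    Finset.mem_filter, Finset.mem_univ, true_and, comp_apply]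
  tauto

end CWTree

def IsCWTreeRealizable {V : Type*} (k : ℕ) (G : SimpleGraph V) (c : V → Fin k) : Prop :=
  ∃ s : CWTree k, ∃ e : G ≃g s.graph, ∀ v, s.coloring (e v) = c v

namespace IsCWTreeRealizable

variable {V W : Type*} {k : ℕ} {G : SimpleGraph V} {c : V → Fin k}

lemma sum {H : SimpleGraph W} {d : W → Fin k} (hG : IsCWTreeRealizable k G c)
    (hH : IsCWTreeRealizable k H d) : IsCWTreeRealizable k (G ⊕g H) (Sum.elim c d) := by
  obtain ⟨s₁, e₁, he₁⟩ := hG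
  obtain ⟨s₂, e₂, he₂⟩ := hH
  refine ⟨.node ∅ id s₁ s₂, ?_⟩
  rw [CWTree.graph_node_empty]
  exact ⟨e₁.sumCongr e₂, Sum.rec he₁ he₂⟩

lemma addColorEdges (h : IsCWTreeRealizable k G c) (i j : Fin k) :
    IsCWTreeRealizable k (addColorEdges G c i j) c := by
  obtain ⟨s, e, he⟩ := h
  cases s with
  | leaf a =>
    have : Subsingleton (CWTree.leaf a).V := inferInstanceAs (Subsingleton Unit)
    have : Subsingleton V := e.toEquiv.subsingleton
    rw [addColorEdges_of_subsingleton]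
    exact ⟨.leaf a, e, he⟩
  | node R f l r =>
    refine ⟨.node (R ∪ ({p | f p.1 = i ∧ f p.2 = j} : Finset (Fin k × Fin k))) f l r, ?_⟩
    rw [CWTree.graph_node_union]
    exact ⟨e.addColorEdges he i j, he⟩

lemma comp (h : IsCWTreeRealizable k G c) (g : Fin k → Fin k) :
    IsCWTreeRealizable k G (g ∘ c) := by
  obtain ⟨s, e, he⟩ := h
  cases s with
  | leaf a => exact ⟨.leaf (g a), e, fun v => congrArg g (he v)⟩
  | node R f l r => exact ⟨.node R (g ∘ f) l r, e, fun v => congrArg g (he v)⟩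

end IsCWTreeRealizable

lemma isCWTreeRealizable_cwExpr {k' k : ℕ} {φ : Fin k' → Fin k} (hφ : Injective φ) :
    ∀ t : CWExpr k', IsCWTreeRealizable k t.graph (φ ∘ t.coloring)
  | .single c => ⟨.leaf (φ c), Iso.refl, fun _ => rfl⟩
  | .union t₁ t₂ => by
    show IsCWTreeRealizable k (joinGraph t₁.graph t₂.graph t₁.coloring t₂.coloring ∅)
      (φ ∘ Sum.elim t₁.coloring t₂.coloring)
    rw [joinGraph_empty, Sum.comp_elim]
    exact (isCWTreeRealizable_cwExpr hφ t₁).sum (isCWTreeRealizable_cwExpr hφ t₂)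
  | .addEdges i j _ t => by
    show IsCWTreeRealizable k (addColorEdges t.graph t.coloring i j) (φ ∘ t.coloring)
    rw [← addColorEdges_comp_injective hφ]
    exact (isCWTreeRealizable_cwExpr hφ t).addColorEdges _ _
  | .recolor i j t => by
    have hrecolor : φ ∘ (t.recolor i j).coloring =
        (fun a => if a = φ i then φ j else a) ∘ φ ∘ t.coloring := by
      funext v
      show φ (if t.coloring v = i then j else t.coloring v) =
        if φ (t.coloring v) = φ i then φ j else φ (t.coloring v)
      simp only [hφ.eq_iff, apply_ite φ]
    rw [hrecolor]
    exact (isCWTreeRealizable_cwExpr hφ t).comp _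

lemma HasCliqueWidthLE.exists_cwTree {V : Type*} {G : SimpleGraph V} {k' k : ℕ}
    (h : HasCliqueWidthLE G k') (hk : k' ≤ k) : ∃ s : CWTree k, Nonempty (G ≃g s.graph) := by
  obtain ⟨t, ⟨e⟩⟩ := h
  obtain ⟨s, e', -⟩ := isCWTreeRealizable_cwExpr (Fin.castLE_injective hk) t
  exact ⟨s, ⟨e.trans e'⟩⟩

namespace CWTree

variable {k : ℕ}

def size : CWTree k → ℕ
  | leaf _ => 1
  | node _ _ l r => l.size + r.size

def vEquiv : (s : CWTree k) → s.V ≃ Fin s.size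
  | leaf _ => Equiv.ofUnique Unit (Fin 1)
  | node _ _ l r => (l.vEquiv.sumCongr r.vEquiv).trans finSumFinEquiv

lemma size_pos : ∀ s : CWTree k, 0 < s.size
  | leaf _ => Nat.one_pos
  | node _ _ l _ => Nat.add_pos_left l.size_pos _

abbrev Label (k : ℕ) := Fin k ⊕ Finset (Fin k × Fin k) × (Fin k → Fin k)

def encode : CWTree k → List (Label k)
  | leaf c => [.inl c]
  | node R f l r => .inr (R, f) :: (l.encode ++ r.encode)

lemma length_encode : ∀ s : CWTree k, s.encode.length = 2 * s.size - 1
  | leaf _ => rfl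
  | node _ _ l r => by
    have := l.size_pos
    have := r.size_pos
    simp only [encode, size, List.length_cons, List.length_append, l.length_encode,
      r.length_encode]
    omega

lemma encode_append_injective : ∀ {s s' : CWTree k} {L L' : List (Label k)},
    s.encode ++ L = s'.encode ++ L' → s = s' ∧ L = L'
  | leaf c, leaf c', L, L', h => by simp_all [encode]
  | leaf _, node _ _ _ _, _, _, h => by simp [encode] at h
  | node _ _ _ _, leaf _, _, _, h => by simp [encode] at h
  | node R f l r, node R' f' l' r', L, L', h => by
    simp only [encode, List.cons_append, List.cons.injEq, Sum.inr.injEq, Prod.mk.injEq,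
      List.append_assoc] at h
    obtain ⟨⟨rfl, rfl⟩, hl⟩ := h
    obtain ⟨rfl, hr⟩ := encode_append_injective hl
    obtain ⟨rfl, rfl⟩ := encode_append_injective hr
    exact ⟨rfl, rfl⟩

lemma encode_injective : Injective (encode : CWTree k → List (Label k)) := fun s s' h =>
  (encode_append_injective (L := []) (L' := []) (by simpa using h)).1

lemma finite_setOf_size_eq (n : ℕ) : {s : CWTree k | s.size = n}.Finite :=
  (List.finite_length_eq (Label k) (2 * n - 1)).of_injOn
    (fun s (hs : s.size = n) => by rw [Set.mem_ofPred_eq, length_encode, hs])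
    encode_injective.injOn

lemma ncard_setOf_size_eq_le (n : ℕ) :
    {s : CWTree k | s.size = n}.ncard ≤ Fintype.card (Label k) ^ (2 * n - 1) := by
  rw [← Nat.card_coe_set_eq, ← card_vector, ← Nat.card_eq_fintype_card]
  exact Nat.card_le_card_of_injective (fun s => ⟨s.1.encode, by rw [length_encode, s.2]⟩)
    fun s s' h => Subtype.ext (encode_injective (congrArg Subtype.val h))

/-- Transported to `ℕ`, so that the graphs of trees of different sizes share a vertex type. -/
def labelledGraph (s : CWTree k) : SimpleGraph ℕ :=
  s.graph.map (s.vEquiv.toEmbedding.trans Fin.valEmbedding)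

lemma eq_comap_labelledGraph {V : Type*} {G : SimpleGraph V} {s : CWTree k} (e : G ≃g s.graph) :
    G = s.labelledGraph.comap fun v => (s.vEquiv (e v) : ℕ) := by
  ext u v
  rw [comap_adj, labelledGraph]
  exact e.map_adj_iff.symm.trans map_adj_apply.symm

end CWTree

lemma ncard_le_of_forall_iso_cwTree {n k : ℕ} (S : Set (SimpleGraph (Fin n)))
    (hS : ∀ G ∈ S, ∃ s : CWTree k, Nonempty (G ≃g s.graph)) :
    S.ncard ≤ Fintype.card (CWTree.Label k) ^ (2 * n - 1) * n ^ n := by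
  let D := {s : CWTree k | s.size = n} ×ˢ (Set.univ : Set (Fin n → Fin n))
  let decode (p : CWTree k × (Fin n → Fin n)) : SimpleGraph (Fin n) :=
    p.1.labelledGraph.comap (Fin.val ∘ p.2)
  have hD : D.Finite := (CWTree.finite_setOf_size_eq n).prod Set.finite_univ
  have hsub : S ⊆ decode '' D := by
    intro G hG
    obtain ⟨s, ⟨e⟩⟩ := hS G hG
    have hsize : s.size = n := Fin.equiv_iff_eq.mp ⟨(e.toEquiv.trans s.vEquiv).symm⟩
    exact ⟨(s, fun v => Fin.cast hsize (s.vEquiv (e v))), ⟨hsize, trivial⟩,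
      (CWTree.eq_comap_labelledGraph e).symm⟩
  calc S.ncard ≤ (decode '' D).ncard := Set.ncard_le_ncard hsub (hD.image _)
    _ ≤ D.ncard := Set.ncard_image_le hD
    _ = {s : CWTree k | s.size = n}.ncard * n ^ n := by simp [D, Set.ncard_prod]
    _ ≤ _ := Nat.mul_le_mul_right _ (CWTree.ncard_setOf_size_eq_le n)

lemma pow_two_mul_sub_one_mul_pow_le {A n : ℕ} (hn : 2 ≤ n) :
    A ^ (2 * n - 1) * n ^ n ≤ n ^ ((2 * A + 1) * n) := by
  have hA : A ≤ n ^ A := Nat.lt_two_pow_self.le.trans (Nat.pow_le_pow_left hn A)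
  calc A ^ (2 * n - 1) * n ^ n ≤ (n ^ A) ^ (2 * n) * n ^ n := by
        gcongr ?_ * _
        exact (Nat.pow_le_pow_left hA _).trans (Nat.pow_le_pow_right (by positivity) (by omega))
    _ = n ^ ((2 * A + 1) * n) := by rw [← pow_mul, ← pow_add]; ring_nf

/-- For every `k ≥ 1` there is a constant `C = C(k)` such that for every `n ≥ 2` the
number of simple graphs on the labeled vertex set `{1,…,n}` of clique-width at most `k`
is at most `n^(C·n)` (equivalently, `2^(C·n·log₂ n)`). -/
theorem count_bounded_cliqueWidth_graphs :
    ∀ k : ℕ, 1 ≤ k → ∃ C : ℕ, 0 < C ∧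
      ∀ n : ℕ, 2 ≤ n →
        ({G : SimpleGraph (Fin n) | cliqueWidth G ≤ k}).ncard ≤ n ^ (C * n) := by
  intro k _
  refine ⟨2 * Fintype.card (CWTree.Label k) + 1, Nat.succ_pos _, fun n hn => ?_⟩
  have : NeZero n := ⟨by omega⟩
  refine (ncard_le_of_forall_iso_cwTree _ fun G hG => ?_).trans (pow_two_mul_sub_one_mul_pow_le hn)
  exact (hasCliqueWidthLE_fin n G).cliqueWidth.exists_cwTree hG
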